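/- Define a chord diagram of order n to be a perfect matching (fixed-point-free involution) of 2n points placed in cyclic order and labeled 1, 2, …, 2n; each matched pair is called a chord. Allow two kinds of moves on chord diagrams: (relabeling) a cyclic rotation of the labels of all 2n points; (band slide) if x and y are cyclically adjacent points belonging to two different chords, then the point x may be deleted from its position and reinserted at a position cyclically adjacent (on either side) to the partner of y, keeping x matched to its original partner, after which the 2n points are relabeled 1,…,2n in the resulting cyclic order. Then every chord diagram of order n can be transformed, by a finite sequence of relabelings and band slides, into a chord diagram in which every chord joins a point of {1,…,n} to a point of {n+1,…,2n}. -/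

import Mathlib

/-!
Every move replaces the matching `f` by a conjugate `σ ∘ f ∘ σ⁻¹`, where `σ` is the relabeling
permutation of the move. Sliding `x` along `x + 1` to the partner `w` of `x + 1`, then sliding `w`
back along its new neighbour, and finally rotating the labels by one, conjugates `f` by the
transposition of `x` and `x + 1`. Adjacent transpositions generate the symmetric group, so `f` can
be moved to each of its conjugates, in particular to one that sends the left ends `x < f x` of
its chords onto the first half of the labels and hence every chord across the middle.
-/

/-- The relabeling permutation of the `m` cyclically ordered points (labeled by
`ZMod m`) induced by deleting the point `x` from its position and reinserting
it immediately after the point `z`, keeping all other points in their cyclic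
order: `x ↦ z`, `t ↦ t - 1` for `t` in the cyclic arc `(x, z]`, and all other
points are unmoved. -/
def movePerm {m : ℕ} (x z : ZMod m) : ZMod m → ZMod m :=
  fun t => if t = x then z else if (t - x).val ≤ (z - x).val then t - 1 else t

/-- The inverse of `movePerm x z`: `z ↦ x`, `t ↦ t + 1` for `t` in the cyclic
arc `[x, z)`, and all other points are unmoved. -/
def movePermInv {m : ℕ} (x z : ZMod m) : ZMod m → ZMod m :=
  fun t => if t = z then x else if (t - x).val < (z - x).val then t + 1 else t

/-- Relabeling move: a cyclic rotation of the labels of all points.  If the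
labels are rotated by `k`, the matching `f` becomes `t ↦ f (t - k) + k`. -/
def IsRelabeling {m : ℕ} (f g : ZMod m → ZMod m) : Prop :=
  ∃ k : ZMod m, g = fun t => f (t - k) + k

/-- Band-slide move: if `x` and `y` are cyclically adjacent points belonging to
two different chords (`f x ≠ y`), then `x` may be deleted from its position and
reinserted at a position cyclically adjacent, on either side, to the partner
`f y` of `y` (i.e. immediately after `z = f y` or immediately after
`z = f y - 1`, which is immediately before `f y`), keeping `x` matched to its
original partner; afterwards the points are relabeled in the resulting cyclic
order, so the new matching is the conjugate of `f` by the relabeling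
permutation `movePerm x z`. -/
def IsBandSlide {m : ℕ} (f g : ZMod m → ZMod m) : Prop :=
  ∃ x y z : ZMod m, (y = x + 1 ∨ y = x - 1) ∧ f x ≠ y ∧
    (z = f y ∨ z = f y - 1) ∧
    g = fun t => movePerm x z (f (movePermInv x z t))

/-- A single move on chord diagrams: a relabeling or a band slide. -/
def DiagramMove {m : ℕ} (f g : ZMod m → ZMod m) : Prop :=
  IsRelabeling f g ∨ IsBandSlide f g

open Equiv

namespace ZMod

variable {m : ℕ}

theorem val_sub_of_lt [NeZero m] {a b : ZMod m} (h : a.val < b.val) :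
    (a - b).val = a.val + m - b.val := by
  have hb : b ≠ 0 := by rintro rfl; simp at h
  have := val_lt b
  rw [sub_eq_add_neg, val_add, neg_val, if_neg hb, Nat.mod_eq_of_lt (by omega)]
  omega

theorem two_le_val [Fact (1 < m)] {a : ZMod m} (h0 : a ≠ 0) (h1 : a ≠ 1) : 2 ≤ a.val := by
  have := (val_injective m).ne h1
  rw [val_one] at this
  have := val_pos.mpr h0
  omega

theorem card_subtype_val_lt [NeZero m] {n : ℕ} (h : n ≤ m) :
    Fintype.card {i : ZMod m // i.val < n} = n := by
  obtain ⟨k, rfl⟩ := Nat.exists_eq_succ_of_ne_zero (NeZero.ne m)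
  rw [Fintype.card_subtype]
  exact Fin.card_filter_val_lt.trans (min_eq_right h)

end ZMod

section MovePerm

open ZMod

variable {m : ℕ}

theorem movePerm_sub (x z t c : ZMod m) :
    movePerm (x - c) (z - c) (t - c) = movePerm x z t - c := by
  unfold movePerm
  simp only [sub_sub_sub_cancel_right, sub_left_inj]
  split_ifs <;> ring

theorem movePermInv_sub (x z t c : ZMod m) :
    movePermInv (x - c) (z - c) (t - c) = movePermInv x z t - c := by
  unfold movePermInv
  simp only [sub_sub_sub_cancel_right, sub_left_inj]
  split_ifs <;> ring

theorem movePerm_self_right {x z : ZMod m} (h : z ≠ x) : movePerm x z z = z - 1 := by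
  simp [movePerm, h]

variable [Fact (1 < m)]

theorem movePerm_add_one {x z : ZMod m} (h : z ≠ x) : movePerm x z (x + 1) = x := by
  have hx : x + 1 ≠ x := by simp
  have hz := val_pos.mpr (sub_ne_zero.mpr h)
  simp [movePerm, hx, val_one, Nat.one_le_iff_ne_zero, hz.ne']

theorem movePerm_zero_movePermInv_zero (z t : ZMod m) :
    movePerm 0 z (movePermInv 0 z t) = t := by
  unfold movePerm movePermInv
  simp only [sub_zero]
  by_cases htz : t = z
  · simp [htz]
  have hz := val_lt z
  rw [if_neg htz]
  rcases ((val_injective m).ne htz).lt_or_gt with h | h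
  · have hval : (t + 1).val = t.val + 1 := by
      rw [val_add_of_lt (by rw [val_one]; omega), val_one]
    have hne : t + 1 ≠ 0 := by intro h0; rw [h0, val_zero] at hval; omega
    rw [if_pos h, if_neg hne, if_pos (by omega), add_sub_cancel_right]
  · have hne : t ≠ 0 := by rintro rfl; simp at h
    rw [if_neg h.not_gt, if_neg hne, if_neg h.not_ge]

theorem movePerm_movePermInv (x z t : ZMod m) : movePerm x z (movePermInv x z t) = t := by
  have h := movePerm_zero_movePermInv_zero (z - x) (t - x)
  rwa [← sub_self x, movePermInv_sub, movePerm_sub, sub_left_inj] at h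

def movePermEquiv (x z : ZMod m) : Perm (ZMod m) where
  toFun := movePerm x z
  invFun := movePermInv x z
  left_inv := Function.LeftInverse.rightInverse_of_surjective (movePerm_movePermInv x z) <|
    Finite.injective_iff_surjective.mp (Function.LeftInverse.injective (movePerm_movePermInv x z))
  right_inv := movePerm_movePermInv x z

theorem movePerm_movePerm_zero {w : ZMod m} (hw0 : w ≠ 0) (hw1 : w ≠ 1) (t : ZMod m) :
    movePerm w 0 (movePerm 0 w t) + 1 = swap 0 1 t := by
  have hw := two_le_val hw0 hw1
  have hwm := val_lt w
  have hneg : (0 - w).val = m - w.val := by rw [zero_sub, neg_val, if_neg hw0]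
  unfold movePerm
  simp only [sub_zero]
  by_cases ht0 : t = 0
  · simp [ht0]
  by_cases ht1 : t = 1
  · simp [ht1, val_one, Nat.one_le_iff_ne_zero, (val_ne_zero w).mpr hw0, hw0.symm]
  rw [swap_apply_of_ne_of_ne ht0 ht1, if_neg ht0]
  have ht := two_le_val ht0 ht1
  have htm := val_lt t
  by_cases htw : t.val ≤ w.val
  · have ht1' : (t - 1).val = t.val - 1 := by rw [val_sub (by rw [val_one]; omega), val_one]
    have hne : t - 1 ≠ w := by intro h; rw [h] at ht1'; omega
    rw [if_pos htw, if_neg hne, if_neg (by rw [val_sub_of_lt (by omega), hneg]; omega),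
      sub_add_cancel]
  · have hne : t ≠ w := by rintro rfl; exact htw le_rfl
    rw [if_neg htw, if_neg hne, if_pos (by rw [val_sub (by omega), hneg]; omega), sub_add_cancel]

/-- Moving `x` just after `w`, then `w` just after `x`, then rotating the labels by one
exchanges the labels of `x` and `x + 1` and nothing else. -/
theorem addRight_one_mul_movePermEquiv_mul_movePermEquiv {x w : ZMod m} (hwx : w ≠ x)
    (hwx1 : w ≠ x + 1) :
    Equiv.addRight 1 * movePermEquiv w x * movePermEquiv x w = swap x (x + 1) := by
  ext t
  have h := movePerm_movePerm_zero (w := w - x) (sub_ne_zero.mpr hwx)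
    (fun h => hwx1 (by linear_combination h)) (t - x)
  have hswap : swap (0 : ZMod m) 1 (t - x) = swap x (x + 1) t - x := by
    simpa using (sub_left_injective (b := x)).swap_apply x (x + 1) t
  rw [hswap, ← sub_self x, movePerm_sub, movePerm_sub] at h
  change movePerm w x (movePerm x w t) + 1 = _
  linear_combination h

end MovePerm

structure IsChordDiagram {α : Type*} (f : α → α) : Prop where
  involutive : Function.Involutive f
  apply_ne_self : ∀ x, f x ≠ x

section Conjugation

variable {α : Type*} {f : α → α}

theorem IsChordDiagram.conj (hf : IsChordDiagram f) (σ : Perm α) :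
    IsChordDiagram (⇑σ ∘ f ∘ ⇑σ⁻¹) := by
  refine ⟨fun x => by simp [hf.involutive _], fun x h => hf.apply_ne_self (σ⁻¹ x) ?_⟩
  simpa [eq_symm_apply] using h

theorem Equiv.Perm.conj_fun_mul (σ τ : Perm α) (f : α → α) :
    ⇑σ ∘ (⇑τ ∘ f ∘ ⇑τ⁻¹) ∘ ⇑σ⁻¹ = ⇑(σ * τ) ∘ f ∘ ⇑(σ * τ)⁻¹ :=
  rfl

theorem Function.Involutive.conj_swap_self [DecidableEq α] (hf : Function.Involutive f) (a : α) :
    ⇑(Equiv.swap a (f a)) ∘ f ∘ ⇑(Equiv.swap a (f a))⁻¹ = f := by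
  funext t
  simp only [Function.comp_apply, swap_inv, swap_apply_def]
  split_ifs <;> grind [Function.Involutive]

end Conjugation

section Moves

variable {m : ℕ}

theorem isRelabeling_conj_addRight (f : ZMod m → ZMod m) (k : ZMod m) :
    IsRelabeling f (⇑(Equiv.addRight k) ∘ f ∘ ⇑(Equiv.addRight k)⁻¹) :=
  ⟨k, by funext t; simp [sub_eq_add_neg]⟩

variable [Fact (1 < m)]

theorem isBandSlide_conj_movePermEquiv {f : ZMod m → ZMod m} {x y z : ZMod m}
    (hy : y = x + 1 ∨ y = x - 1) (hxy : f x ≠ y) (hz : z = f y ∨ z = f y - 1) :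
    IsBandSlide f (⇑(movePermEquiv x z) ∘ f ∘ ⇑(movePermEquiv x z)⁻¹) :=
  ⟨x, y, z, hy, hxy, hz, rfl⟩

variable (m) in
def moveConjugators : Submonoid (Perm (ZMod m)) where
  carrier := {σ | ∀ f, IsChordDiagram f → Relation.ReflTransGen DiagramMove f (⇑σ ∘ f ∘ ⇑σ⁻¹)}
  one_mem' _ _ := by simpa using Relation.ReflTransGen.refl
  mul_mem' {σ τ} hσ hτ f hf := Perm.conj_fun_mul σ τ f ▸ (hτ f hf).trans (hσ _ (hf.conj τ))

/-- Two band slides followed by a rotation by one realize the swap, unless `x` and `x + 1` are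
the ends of one chord, in which case the swap fixes the diagram. -/
theorem swap_add_one_mem_moveConjugators (x : ZMod m) : swap x (x + 1) ∈ moveConjugators m := by
  intro f hf
  by_cases hx : f x = x + 1
  · rw [← hx, Function.Involutive.conj_swap_self hf.involutive]
  set w := f (x + 1)
  have hwx : w ≠ x := fun h => hx (by rw [← hf.involutive (x + 1)]; exact congrArg f h.symm)
  have hwx1 : w ≠ x + 1 := hf.apply_ne_self (x + 1)
  set f₁ := ⇑(movePermEquiv x w) ∘ f ∘ ⇑(movePermEquiv x w)⁻¹
  have hf₁ : f₁ (w - 1) = x := by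
    have : (movePermEquiv x w)⁻¹ (w - 1) = w := by
      rw [Perm.inv_eq_iff_eq]
      exact (movePerm_self_right hwx).symm
    simp only [f₁, Function.comp_apply, this, w, hf.involutive (x + 1)]
    exact movePerm_add_one hwx
  have hf₁w : f₁ w ≠ w - 1 := fun h => hwx <| by
    rw [← hf₁, ← h]
    exact ((hf.conj _).involutive w).symm
  have slide₁ : DiagramMove f f₁ :=
    .inr (isBandSlide_conj_movePermEquiv (.inl rfl) hx (.inl rfl))
  have slide₂ : DiagramMove f₁ (⇑(movePermEquiv w x) ∘ f₁ ∘ ⇑(movePermEquiv w x)⁻¹) :=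
    .inr (isBandSlide_conj_movePermEquiv (.inr rfl) hf₁w (.inl hf₁.symm))
  have rotate :=
    isRelabeling_conj_addRight (⇑(movePermEquiv w x) ∘ f₁ ∘ ⇑(movePermEquiv w x)⁻¹) 1
  rw [Perm.conj_fun_mul, Perm.conj_fun_mul, ← mul_assoc,
    addRight_one_mul_movePermEquiv_mul_movePermEquiv hwx hwx1] at rotate
  exact .head slide₁ (.head slide₂ (.single (.inl rotate)))

theorem swap_mem_moveConjugators (a b : ZMod m) : swap a b ∈ moveConjugators m := by
  suffices ∀ k : ℕ, swap a (a + k) ∈ moveConjugators m by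
    simpa using this (b - a).val
  intro k
  induction k with
  | zero =>
    rw [Nat.cast_zero, add_zero, swap_self, ← Perm.one_def]
    exact one_mem _
  | succ k ih =>
    rw [Nat.cast_succ, ← add_assoc]
    by_cases hk : a = a + k
    · rw [← hk]
      exact swap_add_one_mem_moveConjugators a
    by_cases hk1 : a = a + k + 1
    · rw [← hk1, swap_self, ← Perm.one_def]
      exact one_mem _
    have hτ := swap_add_one_mem_moveConjugators (a + k : ZMod m)
    have : swap a (a + k + 1) =
        swap (a + k) (a + k + 1) * swap a (a + k) * swap (a + k) (a + k + 1) := by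
      simpa [swap_apply_of_ne_of_ne hk hk1] using
        swap_apply_apply (swap (a + k : ZMod m) (a + k + 1)) a (a + k)
    rw [this]
    exact mul_mem (mul_mem hτ ih) hτ

theorem moveConjugators_eq_top : moveConjugators m = ⊤ := by
  rw [eq_top_iff, ← Perm.mclosure_isSwap, Submonoid.closure_le]
  rintro _ ⟨a, b, -, rfl⟩
  exact swap_mem_moveConjugators a b

end Moves

theorem Fintype.two_mul_card_subtype_of_involutive {α : Type*} [Fintype α] {f : α → α}
    (hf : Function.Involutive f) {p : α → Prop} [DecidablePred p] (hp : ∀ x, p (f x) ↔ ¬p x) :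
    2 * Fintype.card {x // p x} = Fintype.card α := by
  have hcompl : Fintype.card {x // p x} = Fintype.card {x // ¬p x} :=
    Fintype.card_congr (subtypeEquiv (hf.toPerm f) fun x => by simp [hp])
  have := Fintype.card_subtype_compl p
  have := Fintype.card_subtype_le p
  omega

theorem IsChordDiagram.exists_conj_crossing {n : ℕ} [NeZero n] {f : ZMod (2 * n) → ZMod (2 * n)}
    (hf : IsChordDiagram f) :
    ∃ σ : Perm (ZMod (2 * n)), ∀ i : ZMod (2 * n), i.val < n → n ≤ ((⇑σ ∘ f ∘ ⇑σ⁻¹) i).val := by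
  classical
  have : NeZero (2 * n) := ⟨by simp [NeZero.ne n]⟩
  let IsLeftEnd (x : ZMod (2 * n)) : Prop := x.val < (f x).val
  have hleft (x) : IsLeftEnd (f x) ↔ ¬IsLeftEnd x := by
    have := (ZMod.val_injective _).ne (hf.apply_ne_self x)
    simp only [IsLeftEnd, hf.involutive x]
    omega
  have hcard := Fintype.two_mul_card_subtype_of_involutive hf.involutive hleft
  rw [ZMod.card] at hcard
  let e : {x // IsLeftEnd x} ≃ {i : ZMod (2 * n) // i.val < n} :=
    Fintype.equivOfCardEq (by rw [ZMod.card_subtype_val_lt (by omega)]; omega)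
  refine ⟨e.extendSubtype, fun i hi => ?_⟩
  have hσi : IsLeftEnd (e.extendSubtype⁻¹ i) := by
    by_contra h
    exact e.extendSubtype_not_mem _ h (by simpa using hi)
  exact not_lt.mp (e.extendSubtype_not_mem _ fun h => (hleft _).mp h hσi)

/-- A chord diagram of order `n` is a perfect matching
(fixed-point-free involution `f`) of `2n` points placed in cyclic order,
labeled by `ZMod (2n)`; each matched pair `{x, f x}` is a chord.  Every chord
diagram of order `n` can be transformed, by a finite sequence of relabelings
and band slides, into a chord diagram in which every chord joins a point of
the first half (labels with value `< n`) to a point of the second half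
(labels with value `≥ n`). -/
theorem chord_diagram_reducible_to_bipartite
    (n : ℕ) (f : ZMod (2*n) → ZMod (2*n))
    (hinv : ∀ x, f (f x) = x) (hfpf : ∀ x, f x ≠ x) :
    ∃ g : ZMod (2*n) → ZMod (2*n),
      Relation.ReflTransGen DiagramMove f g ∧
      ∀ i : ZMod (2*n), i.val < n → n ≤ (g i).val := by
  rcases Nat.eq_zero_or_pos n with rfl | hn
  · exact ⟨f, .refl, fun i hi => absurd hi (Nat.not_lt_zero _)⟩
  have : NeZero n := ⟨hn.ne'⟩
  have : Fact (1 < 2 * n) := ⟨by omega⟩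
  have hf : IsChordDiagram f := ⟨hinv, hfpf⟩
  obtain ⟨σ, hσ⟩ := hf.exists_conj_crossing
  have hσ_mem : σ ∈ moveConjugators (2 * n) := by simp [moveConjugators_eq_top]
  exact ⟨_, hσ_mem f hf, hσ⟩
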